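/- arXiv:2412.00476 — 3 statements merged into one kernel-verified Lean document; each statement's English description precedes it below -/
import Mathlib

section
/- For integers n ≥ 2, k ≥ 1 and positive integers d_1,...,d_k, with F_n defined as the alternating sum F_n(t; d_1,...,d_k) = Σ_{I ⊆ {1,...,k}} (-1)^{|I|} C(t + n - d_I, n), the following recursion holds: n·F_n(t; d_1,...,d_k) = (t + n - Σ_{i=1}^k d_i)·F_{n-1}(t; d_1,...,d_k) + Σ_{i=1}^k d_i · F_{n-1}(t; d_1,...,d̂_i,...,d_k). -/
open Polynomial Finset

/-- The binomial coefficient polynomial `C(t, n) = (1/n!) ∏_{j=0}^{n-1} (t - j)`,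
as a polynomial in `t` with rational coefficients. -/
noncomputable def binomPoly (n : ℕ) : Polynomial ℚ :=
  Polynomial.C ((n.factorial : ℚ)⁻¹) * ∏ j ∈ Finset.range n, (Polynomial.X - Polynomial.C (j : ℚ))

/-- `Fpoly n s d = Σ_{I ⊆ s} (-1)^{|I|} C(t + n - d_I, n)` where `d_I = Σ_{i ∈ I} d i`.
For `s = {0, 1, …, k-1}` this is the polynomial `F_n(t; d_1, …, d_k)` of the paper. -/
noncomputable def Fpoly (n : ℕ) (s : Finset ℕ) (d : ℕ → ℕ) : Polynomial ℚ :=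
  ∑ I ∈ s.powerset,
    Polynomial.C ((-1 : ℚ) ^ I.card) *
      (binomPoly n).comp (Polynomial.X + Polynomial.C ((n : ℚ) - ∑ i ∈ I, (d i : ℚ)))

/-!
Absorption `(m+1) C(t, m+1) = t C(t-1, m)` applied to each term of `F_{m+1}` gives
`(m+1) C(t + m+1 - d_I, m+1) = (t + m+1 - d_I) C(t + m - d_I, m)`. Splitting
`t + m+1 - d_I = (t + m+1 - d_S) + (d_S - d_I)` and writing `d_S - d_I = Σ_{i ∈ S \ I} d_i`,
the second part regroups, by exchanging the sums over `I` and `i`, into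
`Σ_i d_i F_m(t; S \ {i})`.
-/

theorem sum_sum_powerset_erase {α M : Type*} [DecidableEq α] [AddCommMonoid M]
    (s : Finset α) (f : α → Finset α → M) :
    ∑ i ∈ s, ∑ I ∈ (s.erase i).powerset, f i I = ∑ I ∈ s.powerset, ∑ i ∈ s \ I, f i I := by
  refine Finset.sum_comm' fun i I => ?_
  simp only [mem_powerset, subset_erase, mem_sdiff]
  tauto

theorem natCast_mul_binomPoly_succ (m : ℕ) :
    C ((m + 1 : ℕ) : ℚ) * binomPoly (m + 1) = X * (binomPoly m).comp (X - 1) := by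
  have hfactorial : ((m + 1 : ℕ) : ℚ) * ((m + 1).factorial : ℚ)⁻¹ = (m.factorial : ℚ)⁻¹ := by
    rw [Nat.factorial_succ, Nat.cast_mul, mul_inv, ← mul_assoc,
      mul_inv_cancel₀ (by positivity), one_mul]
  have hshift : ∀ j : ℕ, (X - C (j : ℚ)).comp (X - 1) = X - C ((j + 1 : ℕ) : ℚ) := fun j => by
    simp only [sub_comp, X_comp, C_comp, Nat.cast_succ, map_add, map_one]
    ring
  simp only [binomPoly, mul_comp, C_comp, Polynomial.prod_comp, hshift, prod_range_succ' _ m,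
    Nat.cast_zero, map_zero, sub_zero, ← mul_assoc, ← C_mul, hfactorial]
  ring

theorem natCast_mul_binomPoly_succ_comp (m : ℕ) (a : ℚ) :
    C ((m + 1 : ℕ) : ℚ) * (binomPoly (m + 1)).comp (X + C a)
      = (X + C a) * (binomPoly m).comp (X + C (a - 1)) := by
  have h := congrArg (·.comp (X + C a)) (natCast_mul_binomPoly_succ m)
  simp only [mul_comp, C_comp, X_comp, comp_assoc] at h
  rw [h, map_sub, map_one, sub_comp, X_comp, one_comp, add_sub_assoc]

theorem natCast_mul_Fpoly_succ (m : ℕ) (s : Finset ℕ) (d : ℕ → ℕ) :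
    C ((m + 1 : ℕ) : ℚ) * Fpoly (m + 1) s d
      = (X + C (((m + 1 : ℕ) : ℚ) - ∑ i ∈ s, (d i : ℚ))) * Fpoly m s d
        + ∑ i ∈ s, C (d i : ℚ) * Fpoly m (s.erase i) d := by
  set G : Finset ℕ → ℚ[X] := fun I => C ((-1 : ℚ) ^ I.card) *
    (binomPoly m).comp (X + C ((m : ℚ) - ∑ i ∈ I, (d i : ℚ)))
  have hleft : C ((m + 1 : ℕ) : ℚ) * Fpoly (m + 1) s d
      = ∑ I ∈ s.powerset, (X + C (((m + 1 : ℕ) : ℚ) - ∑ i ∈ I, (d i : ℚ))) * G I := by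
    rw [Fpoly, mul_sum]
    refine sum_congr rfl fun I _ => ?_
    rw [mul_left_comm, natCast_mul_binomPoly_succ_comp, Nat.cast_succ, add_sub_right_comm,
      add_sub_cancel_right]
    exact mul_left_comm _ _ _
  have hremoved : ∑ i ∈ s, C (d i : ℚ) * Fpoly m (s.erase i) d
      = ∑ I ∈ s.powerset, C (∑ i ∈ s, (d i : ℚ) - ∑ i ∈ I, (d i : ℚ)) * G I := by
    simp only [Fpoly, mul_sum, sum_sum_powerset_erase, ← sum_mul, ← map_sum]
    refine sum_congr rfl fun I hI => ?_
    rw [sum_sdiff_eq_sub (mem_powerset.mp hI)]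
  rw [hleft, hremoved, Fpoly, mul_sum, ← sum_add_distrib]
  refine sum_congr rfl fun I _ => ?_
  simp only [G, map_sub]
  ring

theorem statement1_general (n k : ℕ) (hn : 2 ≤ n) (d : ℕ → ℕ) :
    Polynomial.C (n : ℚ) * Fpoly n (Finset.range k) d
      = (Polynomial.X + Polynomial.C ((n : ℚ) - ∑ i ∈ Finset.range k, (d i : ℚ))) *
          Fpoly (n - 1) (Finset.range k) d
        + ∑ i ∈ Finset.range k,
            Polynomial.C ((d i : ℚ)) * Fpoly (n - 1) ((Finset.range k).erase i) d := by
  obtain ⟨m, rfl⟩ : ∃ m, n = m + 1 := ⟨n - 1, by omega⟩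
  exact natCast_mul_Fpoly_succ m (range k) d

/-- Lemma 1.2 of the paper. For `n ≥ 2`, `k ≥ 1` and positive integers
`d 0, …, d (k-1)`:
`n·F_n(t; d_1,…,d_k) = (t + n - Σ d_i)·F_{n-1}(t; d_1,…,d_k)
  + Σ_{i=1}^k d_i·F_{n-1}(t; d_1,…,d̂_i,…,d_k)`. -/
theorem statement1 (n k : ℕ) (hn : 2 ≤ n) (hk : 1 ≤ k) (d : ℕ → ℕ)
    (hd : ∀ i ∈ Finset.range k, 0 < d i) :
    Polynomial.C (n : ℚ) * Fpoly n (Finset.range k) d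
      = (Polynomial.X + Polynomial.C ((n : ℚ) - ∑ i ∈ Finset.range k, (d i : ℚ))) *
          Fpoly (n - 1) (Finset.range k) d
        + ∑ i ∈ Finset.range k,
            Polynomial.C ((d i : ℚ)) * Fpoly (n - 1) ((Finset.range k).erase i) d :=
  statement1_general n k hn d
end

section
/- Let n ≥ 1, k ≥ 1 be integers and d_1,...,d_k positive integers with Σ_{i=1}^k d_i = n+1. Write n!·F_n(t; d_1,...,d_k) = Σ_{j=0}^n S_j · t^{n-j}, where F_n(t; d_1,...,d_k) = Σ_{I ⊆ {1,...,k}} (-1)^{|I|} C(t+n-d_I, n). Then S_j = 2·S_j(n; d_1,...,d_{k-1}) if k+j is even, and S_j = 0 if k+j is odd, where S_j(n; d_1,...,d_{k-1}) denotes the coefficient of t^{n-j} in n!·F_n(t; d_1,...,d_{k-1}). -/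
/-!
Write `F_s` for `Fpoly n s d` and `m = d_s`. Since `C(n - 1 - z, n) = (-1)^n C(z, n)`, pairing each
`I ⊆ s` with its complement `s \ I` shows that `F_s` is symmetric or antisymmetric about
`(m - 1 - n) / 2`: `F_s(m - 1 - n - t) = (-1)^(|s| + n) F_s(t)`. Adding an index `a` gives
`F_{s ∪ {a}}(t) = F_s(t) - F_s(t - d_a)`, and when `m + d_a = n + 1` the shift `t ↦ t - d_a` is that
reflection composed with `t ↦ -t`. Hence `F_{s ∪ {a}}(t) = F_s(t) + (-1)^(|s| + 1 + n) F_s(-t)`, and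
the coefficient of `t^i` gets multiplied by `1 + (-1)^(|s| + 1 + n + i)`.
-/

open Polynomial Finset

lemma binomPoly_eval (n : ℕ) (x : ℚ) :
    (binomPoly n).eval x = (n.factorial : ℚ)⁻¹ * (descPochhammer ℚ n).eval x := by
  simp [binomPoly, eval_prod, descPochhammer_eval_eq_prod_range]

lemma binomPoly_eval_sub_one_sub (n : ℕ) (z : ℚ) :
    (binomPoly n).eval (n - 1 - z) = (-1) ^ n * (binomPoly n).eval z := by
  rw [binomPoly_eval, binomPoly_eval, descPochhammer_eval_eq_ascPochhammer,
    show n - 1 - z - n + 1 = -z by ring, ascPochhammer_eval_neg_eq_descPochhammer]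
  ring

lemma Fpoly_comp_reflect (n : ℕ) (s : Finset ℕ) (d : ℕ → ℕ) :
    (Fpoly n s d).comp (C (∑ i ∈ s, (d i : ℚ) - 1 - n) - X)
      = C ((-1) ^ (#s + n)) * Fpoly n s d := by
  refine Polynomial.funext fun x => ?_
  simp only [Fpoly, eval_comp, eval_mul, eval_C, eval_finsetSum, eval_add, eval_sub, eval_X,
    Finset.mul_sum]
  refine sum_nbij' (s \ ·) (s \ ·) (fun _ _ => mem_powerset.mpr sdiff_subset)
    (fun _ _ => mem_powerset.mpr sdiff_subset)
    (fun I hI => Finset.sdiff_sdiff_eq_self (mem_powerset.mp hI))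
    (fun I hI => Finset.sdiff_sdiff_eq_self (mem_powerset.mp hI)) fun I hI => ?_
  have hIs : I ⊆ s := mem_powerset.mp hI
  have hsum : ∑ i ∈ s \ I, (d i : ℚ) = ∑ i ∈ s, (d i : ℚ) - ∑ i ∈ I, (d i : ℚ) :=
    sum_sdiff_eq_sub hIs
  have hsign : (-1 : ℚ) ^ #I = (-1) ^ #s * (-1) ^ #(s \ I) := by
    rw [← card_sdiff_add_card_eq_card hIs, pow_add, mul_comm, ← mul_assoc, ← pow_add,
      Even.neg_one_pow ⟨_, rfl⟩, one_mul]
  rw [show ∑ i ∈ s, (d i : ℚ) - 1 - n - x + (n - ∑ i ∈ I, (d i : ℚ))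
      = n - 1 - (x + (n - ∑ i ∈ s \ I, (d i : ℚ))) by rw [hsum]; ring,
    binomPoly_eval_sub_one_sub, hsign, pow_add]
  ring

lemma Fpoly_insert (n : ℕ) {s : Finset ℕ} {a : ℕ} (ha : a ∉ s) (d : ℕ → ℕ) :
    Fpoly n (insert a s) d = Fpoly n s d - (Fpoly n s d).comp (X - C (d a : ℚ)) := by
  refine Polynomial.funext fun x => ?_
  simp only [Fpoly, eval_sub, eval_comp, eval_finsetSum, eval_mul, eval_C, eval_add, eval_X]
  rw [sum_powerset_insert ha, sub_eq_add_neg, ← sum_neg_distrib]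
  congr 1
  refine sum_congr rfl fun I hI => ?_
  have haI : a ∉ I := fun h => ha (mem_powerset.mp hI h)
  rw [card_insert_of_notMem haI, sum_insert haI, pow_succ,
    show x + (n - (d a + ∑ i ∈ I, (d i : ℚ))) = x - d a + (n - ∑ i ∈ I, (d i : ℚ)) by ring]
  ring

lemma Fpoly_insert_of_sum_eq {n : ℕ} {s : Finset ℕ} {a : ℕ} (ha : a ∉ s) {d : ℕ → ℕ}
    (hsum : ∑ i ∈ s, d i + d a = n + 1) :
    Fpoly n (insert a s) d
      = Fpoly n s d + C ((-1) ^ (#s + 1 + n)) * (Fpoly n s d).comp (-X) := by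
  have hshift : (X - C (d a : ℚ) : ℚ[X]) = (C (∑ i ∈ s, (d i : ℚ) - 1 - n) - X).comp (-X) := by
    have : ∑ i ∈ s, (d i : ℚ) - 1 - n = -d a := by
      have hsumℚ : ∑ i ∈ s, (d i : ℚ) + d a = n + 1 := by exact_mod_cast hsum
      linarith
    rw [this, sub_comp, C_comp, X_comp, map_neg]
    ring
  rw [Fpoly_insert n ha, hshift, ← comp_assoc, Fpoly_comp_reflect, mul_comp, C_comp,
    add_right_comm, pow_succ, mul_neg_one, map_neg, neg_mul, sub_eq_add_neg]

lemma coeff_add_C_mul_comp_neg_X (p : ℚ[X]) (c : ℚ) (i : ℕ) :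
    (p + C c * p.comp (-X)).coeff i = (1 + c * (-1) ^ i) * p.coeff i := by
  rw [coeff_add, coeff_C_mul, show (-X : ℚ[X]) = C (-1) * X by simp, comp_C_mul_X_coeff]
  ring

theorem statement2_general (n k : ℕ) (hk : 1 ≤ k) (d : ℕ → ℕ)
    (hsum : ∑ i ∈ Finset.range k, d i = n + 1) :
    ∀ j ≤ n,
      if Even (k + j) then
        (Polynomial.C (n.factorial : ℚ) * Fpoly n (Finset.range k) d).coeff (n - j)
          = 2 * (Polynomial.C (n.factorial : ℚ) * Fpoly n (Finset.range (k - 1)) d).coeff (n - j)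
      else
        (Polynomial.C (n.factorial : ℚ) * Fpoly n (Finset.range k) d).coeff (n - j) = 0 := by
  intro j hj
  obtain ⟨k, rfl⟩ := Nat.exists_eq_add_of_le' hk
  rw [sum_range_succ] at hsum
  have hcoeff : (C (n.factorial : ℚ) * Fpoly n (range (k + 1)) d).coeff (n - j)
      = (1 + (-1) ^ (k + 1 + j)) * (C (n.factorial : ℚ) * Fpoly n (range k) d).coeff (n - j) := by
    have hsign : (-1 : ℚ) ^ (k + 1 + n) * (-1) ^ (n - j) = (-1) ^ (k + 1 + j) := by
      rw [← pow_add, show k + 1 + n + (n - j) = k + 1 + j + 2 * (n - j) by omega, pow_add,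
        pow_mul, neg_one_sq, one_pow, mul_one]
    rw [range_add_one, Fpoly_insert_of_sum_eq notMem_range_self hsum, card_range, coeff_C_mul,
      coeff_C_mul, coeff_add_C_mul_comp_neg_X, hsign]
    ring
  rw [Nat.add_sub_cancel]
  split_ifs with hpar
  · rw [hcoeff, hpar.neg_one_pow]; ring
  · rw [hcoeff, (Nat.not_even_iff_odd.mp hpar).neg_one_pow]; ring

/-- Lemma 3.5 of the paper. If `Σ_{i=1}^k d_i = n + 1`, then the
coefficient `S_j` of `t^{n-j}` in `n!·F_n(t; d_1,…,d_k)` equals twice the corresponding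
coefficient of `n!·F_n(t; d_1,…,d_{k-1})` when `k + j` is even, and vanishes when
`k + j` is odd. -/
theorem statement2 (n k : ℕ) (hn : 1 ≤ n) (hk : 1 ≤ k) (d : ℕ → ℕ)
    (hd : ∀ i ∈ Finset.range k, 0 < d i)
    (hsum : ∑ i ∈ Finset.range k, d i = n + 1) :
    ∀ j ≤ n,
      if Even (k + j) then
        (Polynomial.C (n.factorial : ℚ) * Fpoly n (Finset.range k) d).coeff (n - j)
          = 2 * (Polynomial.C (n.factorial : ℚ) * Fpoly n (Finset.range (k - 1)) d).coeff (n - j)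
      else
        (Polynomial.C (n.factorial : ℚ) * Fpoly n (Finset.range k) d).coeff (n - j) = 0 :=
  statement2_general n k hk d hsum
end

section
/- Let P(t) = Σ_{i=0}^n a_i t^i be a real polynomial with n ≥ 2 and a_i ≥ 0 for all i ≥ 2. Suppose that P(2) ≥ 2P(1) − 1. Then for every integer k ≥ 2, (P(k+1) − 1)/(k+1) > (P(k) − 1)/k. -/
lemma key_pow (k : ℝ) (hk : 2 ≤ k) : ∀ i : ℕ, 2 ≤ i →
    (2:ℝ)^i ≤ k * (k+1)^i - (k+1) * k^i := by
  intro i hi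
  induction i, hi using Nat.le_induction with
  | base => nlinarith
  | succ i hi ih =>
    have h1 : (0:ℝ) < k := by linarith
    have h2 : (0:ℝ) ≤ k^i := by positivity
    have h3 : (0:ℝ) < (2:ℝ)^i := by positivity
    have := mul_le_mul_of_nonneg_left ih (by linarith : (0:ℝ) ≤ k + 1)
    calc (2:ℝ)^(i+1) = 2 * 2^i := by ring
    _ ≤ (k+1) * 2^i := by nlinarith
    _ ≤ (k+1) * (k * (k+1)^i - (k+1) * k^i) := this
    _ ≤ k * (k+1)^(i+1) - (k+1) * k^(i+1) := by
        have : (0:ℝ) ≤ (k+1) * k^i := by positivity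
        ring_nf
        nlinarith [this]

/-- algebraic core of Lemma 2.3 of the paper. Let `P` be a real
polynomial of degree `n ≥ 2` with non-negative coefficients in all degrees `≥ 2`, and
suppose `P(2) ≥ 2·P(1) - 1`. Then for every integer `k ≥ 2`,
`(P(k+1) - 1)/(k+1) > (P(k) - 1)/k`. -/
theorem statement5 (P : Polynomial ℝ) (n : ℕ) (hn : 2 ≤ n) (hdeg : P.natDegree = n)
    (hcoeff : ∀ i : ℕ, 2 ≤ i → 0 ≤ P.coeff i)
    (hP2 : 2 * P.eval 1 - 1 ≤ P.eval 2) :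
    ∀ k : ℕ, 2 ≤ k →
      (P.eval (k : ℝ) - 1) / (k : ℝ) < (P.eval ((k : ℝ) + 1) - 1) / ((k : ℝ) + 1) := by
  intro k hk
  have hk' : (2:ℝ) ≤ (k:ℝ) := by exact_mod_cast hk
  have hk0 : (0:ℝ) < (k:ℝ) := by linarith
  have hk10 : (0:ℝ) < (k:ℝ) + 1 := by linarith
  have hdeg' : P.natDegree < n + 1 := by omega
  have hev : ∀ x : ℝ, P.eval x = ∑ i ∈ Finset.range (n+1), P.coeff i * x ^ i := by
    intro x
    exact Polynomial.eval_eq_sum_range' hdeg' x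
  set K : ℝ := (k:ℝ)
  -- positivity of the key sum
  have hg0 : ∀ i : ℕ, 2 ≤ i →
      (0:ℝ) < K * (K+1)^i - (K+1) * K^i - 2^i + 2 := by
    intro i hi
    have h1 := key_pow K hk' i hi
    have h2 : (4:ℝ) ≤ 2^i := by
      calc (4:ℝ) = 2^2 := by norm_num
      _ ≤ 2^i := by
        apply pow_le_pow_right₀ (by norm_num) hi
    linarith
  have hterm : ∀ i ∈ Finset.range (n+1),
      (0:ℝ) ≤ P.coeff i * (K * (K+1)^i - (K+1) * K^i - 2^i + 2) := by
    intro i _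
    match i with
    | 0 => ring_nf; nlinarith
    | 1 => ring_nf; nlinarith
    | (m+2) =>
      exact mul_nonneg (hcoeff _ (by omega)) (le_of_lt (hg0 _ (by omega)))
  have hPne : P ≠ 0 := by
    intro h
    rw [h] at hdeg
    simp at hdeg
    omega
  have han : 0 < P.coeff n := by
    have hne : P.coeff n ≠ 0 := by
      rw [← hdeg]
      exact Polynomial.leadingCoeff_ne_zero.mpr hPne
    exact lt_of_le_of_ne (hcoeff n hn) (Ne.symm hne)
  have hstrict : ∃ i ∈ Finset.range (n+1),
      (0:ℝ) < P.coeff i * (K * (K+1)^i - (K+1) * K^i - 2^i + 2) := by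
    refine ⟨n, Finset.self_mem_range_succ n, ?_⟩
    exact mul_pos han (hg0 n hn)
  have hD : (0:ℝ) < ∑ i ∈ Finset.range (n+1),
      P.coeff i * (K * (K+1)^i - (K+1) * K^i - 2^i + 2) :=
    Finset.sum_pos' hterm hstrict
  have hA : ∑ i ∈ Finset.range (n+1),
      P.coeff i * (K * (K+1)^i - (K+1) * K^i - 2^i + 2)
      = K * P.eval (K+1) - (K+1) * P.eval K - P.eval 2 + 2 * P.eval 1 := by
    rw [hev (K+1), hev K, hev 2, hev 1, Finset.mul_sum, Finset.mul_sum, Finset.mul_sum,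
      ← Finset.sum_sub_distrib, ← Finset.sum_sub_distrib, ← Finset.sum_add_distrib]
    apply Finset.sum_congr rfl
    intro i _
    ring
  rw [hA] at hD
  rw [div_lt_div_iff₀ hk0 hk10]
  nlinarith [hD, hP2]
end
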